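/- arXiv:1007.2103 — 2 statements merged into one kernel-verified Lean document; each statement's English description precedes it below -/
import Mathlib

section
/- Let T and T' be two tournaments on the same finite vertex set V. The least m ∈ ℕ such that T' = Inv(T, (X_i)_{i<m}) for some sequence (X_i)_{i<m} of subsets of V (equivalently, the graphic distance d(T,T') in the graph on all tournaments on V whose edges are the pairs (S, Inv(S,X)) with Inv(S,X) ≠ S) equals the Boolean dimension of the Boolean sum T +̇ T'. -/
/-- A tournament on a vertex set `V`: a loopless directed graph such that for all
distinct `x, y` exactly one of `(x,y)`, `(y,x)` is an arc. -/
structure Tournament (V : Type*) where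
  rel : V → V → Prop
  irrefl : ∀ x, ¬ rel x x
  total : ∀ x y, x ≠ y → rel x y ∨ rel y x
  asymm : ∀ x y, rel x y → ¬ rel y x

namespace Tournament

variable {V : Type*} {W : Type*}

/-- The tournament obtained from `T` by reversing all arcs both of whose
endpoints lie in `X`. -/
def inv (T : Tournament V) (X : Set V) : Tournament V where
  rel x y := (x ∈ X ∧ y ∈ X ∧ T.rel y x) ∨ ((x ∉ X ∨ y ∉ X) ∧ T.rel x y)
  irrefl x := by have := T.irrefl x; tauto
  total x y hxy := by
    have := T.total x y hxy
    by_cases hx : x ∈ X <;> by_cases hy : y ∈ X <;> tauto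
  asymm x y := by have h1 := T.asymm x y; have h2 := T.asymm y x; tauto

/-- Successive inversions along a finite sequence of subsets (`X_0` first). -/
def invSeq (T : Tournament V) (Xs : List (Set V)) : Tournament V :=
  Xs.foldl Tournament.inv T

/-- A tournament is acyclic (transitive) when its arc relation is transitive,
i.e. a strict linear order. -/
def IsAcyclic (T : Tournament V) : Prop :=
  ∀ x y z, T.rel x y → T.rel y z → T.rel x z

/-- The inversion index: the least number of subsets to be inverted to reach an
acyclic tournament. -/
noncomputable def index (T : Tournament V) : ℕ :=
  sInf {m | ∃ Xs : List (Set V), Xs.length = m ∧ (T.invSeq Xs).IsAcyclic}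

/-- Induced subtournament on a set of vertices. -/
def restrict (T : Tournament V) (A : Set V) : Tournament A where
  rel x y := T.rel x y
  irrefl x := T.irrefl x
  total x y hxy := T.total x y (fun h => hxy (Subtype.ext h))
  asymm x y := T.asymm x y

/-- `T − x`: the subtournament induced on `V ∖ {x}`. -/
def erase (T : Tournament V) (x : V) : Tournament {y : V // y ≠ x} :=
  T.restrict {y | y ≠ x}

/-- `S` embeds into `T`: `S` is isomorphic to the subtournament of `T` induced on
some subset of the vertices of `T`. -/
def Embeds (S : Tournament V) (T : Tournament W) : Prop :=
  ∃ f : V → W, Function.Injective f ∧ ∀ x y, S.rel x y ↔ T.rel (f x) (f y)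

/-- Isomorphism of tournaments. -/
def Iso (S : Tournament V) (T : Tournament W) : Prop :=
  ∃ e : V ≃ W, ∀ x y, S.rel x y ↔ T.rel (e x) (e y)

/-- The dual tournament, obtained by reversing all arcs. -/
def dual (T : Tournament V) : Tournament V where
  rel x y := T.rel y x
  irrefl x := T.irrefl x
  total x y hxy := (T.total x y hxy).symm
  asymm x y h := T.asymm y x h

/-- `X` is an interval of `T`. -/
def IsInterval (T : Tournament V) (X : Set V) : Prop :=
  ∀ y ∉ X, (∀ x ∈ X, T.rel x y) ∨ (∀ x ∈ X, T.rel y x)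

/-- A tournament is indecomposable when all its intervals are trivial. -/
def Indecomposable (T : Tournament V) : Prop :=
  ∀ X : Set V, T.IsInterval X → X = ∅ ∨ X = Set.univ ∨ ∃ x, X = {x}

end Tournament

/-- The transitive tournament `n̲` on `{0, …, n−1}`, with arcs `(i,j)` for `i < j`. -/
def linear (n : ℕ) : Tournament (Fin n) where
  rel x y := x < y
  irrefl x := lt_irrefl x
  total _ _ h := h.lt_or_gt
  asymm _ _ h := lt_asymm h

/-- `2ℕ_{<k} = {0, 2, …, 2(k−1)}` as a subset of `Fin N`. -/
def evensLT {N : ℕ} (k : ℕ) : Set (Fin N) := {i | (i : ℕ) % 2 = 0 ∧ (i : ℕ) < 2 * k}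

/-- `2ℕ_{<k}+1 = {1, 3, …, 2k−1}` as a subset of `Fin N`. -/
def oddsLT {N : ℕ} (k : ℕ) : Set (Fin N) := {i | (i : ℕ) % 2 = 1 ∧ (i : ℕ) < 2 * k}

/-- The Boolean dimension of a (loopless, undirected) graph `G`: the least `m` such
that `G` can be represented by the non-orthogonality relation on `(𝔽₂)^m` with the
ordinary scalar product. -/
noncomputable def booleanDim {V : Type*} (G : SimpleGraph V) : ℕ :=
  sInf {m | ∃ f : V → (Fin m → ZMod 2), ∀ x y : V, x ≠ y →
    (G.Adj x y ↔ ∑ i, f x i * f y i = 1)}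

/-- The Boolean sum `T +̇ T'` of two tournaments on the same vertex set: the graph
whose edges are the pairs of distinct vertices on which the two arcs have opposite
orientations. -/
def boolSum {V : Type*} (T T' : Tournament V) : SimpleGraph V where
  Adj x y := x ≠ y ∧ ¬ (T.rel x y ↔ T'.rel x y)
  symm := ⟨by
    rintro x y ⟨hxy, h⟩
    refine ⟨hxy.symm, ?_⟩
    have h1 : T.rel y x ↔ ¬ T.rel x y :=
      ⟨fun hr => T.asymm y x hr, fun hn => (T.total x y hxy).resolve_left hn⟩
    have h2 : T'.rel y x ↔ ¬ T'.rel x y :=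
      ⟨fun hr => T'.asymm y x hr, fun hn => (T'.total x y hxy).resolve_left hn⟩
    tauto⟩
  loopless := ⟨fun x => by simp⟩


/-! Inverting `X` reverses exactly the arcs inside `X`, so after inverting `X₀, …, X_{m-1}` the arc
between `x ≠ y` is reversed iff an odd number of the `Xᵢ` contain both `x` and `y`, i.e. iff the
membership vectors of `x` and `y` in `(𝔽₂)^m` have scalar product `1`. Hence
`T' = Inv(T, (Xᵢ)_{i<m})` iff these vectors represent `T +̇ T'`, and every `f : V → (𝔽₂)^m` is the
membership map of the sets `Xᵢ = {x | f(x)ᵢ = 1}`. -/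

lemma ZMod.eq_zero_or_one_of_two (a : ZMod 2) : a = 0 ∨ a = 1 := by
  revert a; decide

def SimpleGraph.IsBooleanRepr {V : Type*} {m : ℕ} (G : SimpleGraph V) (f : V → Fin m → ZMod 2) :
    Prop :=
  ∀ x y, x ≠ y → (G.Adj x y ↔ f x ⬝ᵥ f y = 1)

lemma booleanDim_eq_sInf_isBooleanRepr {V : Type*} (G : SimpleGraph V) :
    booleanDim G = sInf {m | ∃ f : V → Fin m → ZMod 2, G.IsBooleanRepr f} :=
  rfl

section MembershipVector

variable {V : Type*} {m : ℕ}

noncomputable def membershipVector (X : Fin m → Set V) (x : V) : Fin m → ZMod 2 :=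
  fun i => (X i).indicator 1 x

lemma membershipVector_setOf_eq_one (f : V → Fin m → ZMod 2) :
    membershipVector (fun i => {x | f x i = 1}) = f := by
  ext x i
  simp only [membershipVector, Set.indicator_apply, Set.mem_ofPred_eq, Pi.one_apply]
  rcases (f x i).eq_zero_or_one_of_two with h | h <;> simp [h]

open scoped Classical in
lemma membershipVector_mul_apply (X : Fin m → Set V) (x y : V) (i : Fin m) :
    membershipVector X x i * membershipVector X y i = if x ∈ X i ∧ y ∈ X i then 1 else 0 := by
  simp only [membershipVector, Set.indicator_apply, Pi.one_apply]
  split_ifs <;> simp_all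

end MembershipVector

namespace Tournament

variable {V : Type*}

lemma rel_swap_iff_not (T : Tournament V) {x y : V} (hxy : x ≠ y) : T.rel y x ↔ ¬ T.rel x y :=
  ⟨T.asymm y x, (T.total x y hxy).resolve_left⟩

lemma inv_rel_iff (T : Tournament V) (X : Set V) {x y : V} (hxy : x ≠ y) :
    (T.inv X).rel x y ↔ (T.rel x y ↔ ¬ (x ∈ X ∧ y ∈ X)) := by
  have := T.rel_swap_iff_not hxy
  simp only [inv]
  tauto

lemma invSeq_cons (T : Tournament V) (X : Set V) (Xs : List (Set V)) :
    T.invSeq (X :: Xs) = (T.inv X).invSeq Xs :=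
  rfl

open scoped Classical in
theorem invSeq_ofFn_rel_iff (T : Tournament V) {m : ℕ} (X : Fin m → Set V) {x y : V}
    (hxy : x ≠ y) :
    (T.invSeq (List.ofFn X)).rel x y ↔
      (T.rel x y ↔ membershipVector X x ⬝ᵥ membershipVector X y = 0) := by
  induction m generalizing T with
  | zero => simp [invSeq, dotProduct]
  | succ m ih =>
    have hsplit : membershipVector X x ⬝ᵥ membershipVector X y =
        (if x ∈ X 0 ∧ y ∈ X 0 then 1 else 0) +
          membershipVector (fun i => X i.succ) x ⬝ᵥ membershipVector (fun i => X i.succ) y := by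
      simp only [dotProduct, Fin.sum_univ_succ, membershipVector_mul_apply]
    rw [List.ofFn_succ, invSeq_cons, ih, inv_rel_iff _ _ hxy, hsplit]
    generalize membershipVector (fun i => X i.succ) x ⬝ᵥ membershipVector (fun i => X i.succ) y = d
    rcases d.eq_zero_or_one_of_two with rfl | rfl <;> split_ifs <;>
      simp [CharTwo.add_self_eq_zero] <;> tauto

theorem forall_invSeq_ofFn_rel_iff_iff_isBooleanRepr (T T' : Tournament V) {m : ℕ}
    (X : Fin m → Set V) :
    (∀ x y, (T.invSeq (List.ofFn X)).rel x y ↔ T'.rel x y) ↔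
      (boolSum T T').IsBooleanRepr (membershipVector X) := by
  refine forall₂_congr fun x y => ?_
  by_cases hxy : x = y
  · subst hxy
    simpa using iff_of_false ((T.invSeq _).irrefl x) (T'.irrefl x)
  · rw [invSeq_ofFn_rel_iff T X hxy]
    simp only [boolSum, ne_eq, hxy, not_false_eq_true, true_and, forall_const]
    rcases (membershipVector X x ⬝ᵥ membershipVector X y).eq_zero_or_one_of_two with h | h <;>
      simp [h, not_iff]

end Tournament

theorem dist_eq_booleanDim_boolSum_general {V : Type*} (T T' : Tournament V) :
    sInf {m | ∃ Xs : List (Set V), Xs.length = m ∧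
        ∀ x y, (T.invSeq Xs).rel x y ↔ T'.rel x y} =
      booleanDim (boolSum T T') := by
  rw [booleanDim_eq_sInf_isBooleanRepr]
  congr 1
  ext m
  constructor
  · rintro ⟨Xs, rfl, hXs⟩
    rw [← List.ofFn_get Xs, Tournament.forall_invSeq_ofFn_rel_iff_iff_isBooleanRepr] at hXs
    exact ⟨_, hXs⟩
  · rintro ⟨f, hf⟩
    refine ⟨List.ofFn fun i => {x | f x i = 1}, List.length_ofFn, ?_⟩
    rwa [Tournament.forall_invSeq_ofFn_rel_iff_iff_isBooleanRepr, membershipVector_setOf_eq_one]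

/-- the graphic distance between two tournaments `T, T'` on the same
finite vertex set — the least `m` such that `T' = Inv(T, (X_i)_{i<m})` — equals the
Boolean dimension of the Boolean sum `T +̇ T'`. -/
theorem dist_eq_booleanDim_boolSum {V : Type*} [Fintype V] (T T' : Tournament V) :
    sInf {m | ∃ Xs : List (Set V), Xs.length = m ∧
        ∀ x y, (T.invSeq Xs).rel x y ↔ T'.rel x y} =
      booleanDim (boolSum T T') :=
  dist_eq_booleanDim_boolSum_general T T'
end

section
/- Let m ∈ ℕ and let T be a tournament (on an arbitrary vertex set). Then i(T) ≤ m if and only if every finite induced subtournament of T has inversion index at most m. -/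
namespace Tournament

/-- The inversion index with values in `ℕ∞`: it is `⊤` (infinite) when no finite
sequence of inversions makes the tournament acyclic. -/
noncomputable def indexE {V : Type*} (T : Tournament V) : ℕ∞ :=
  sInf {n : ℕ∞ | ∃ Xs : List (Set V), (Xs.length : ℕ∞) = n ∧ (T.invSeq Xs).IsAcyclic}

end Tournament

theorem exists_forall_mem_of_finitely_determined {ι X κ : Type*} [Finite X]
    (C : κ → Set (ι → X))
    (hC : ∀ k, ∃ s : Finset ι, ∀ f g : ι → X, (∀ i ∈ s, f i = g i) → f ∈ C k → g ∈ C k)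
    (h : ∀ u : Finset κ, ∃ f, ∀ k ∈ u, f ∈ C k) : ∃ f, ∀ k, f ∈ C k := by
  let _ : TopologicalSpace X := ⊥
  have : DiscreteTopology X := ⟨rfl⟩
  have hclosed : ∀ k, IsClosed (C k) := by
    intro k
    obtain ⟨s, hs⟩ := hC k
    have hCk : C k = s.restrict ⁻¹' (s.restrict '' C k) := by
      refine (Set.subset_preimage_image _ _).antisymm ?_
      rintro g ⟨f, hf, hfg⟩
      exact hs f g (fun i hi => congrFun hfg ⟨i, hi⟩) hf
    rw [hCk]
    exact (isClosed_discrete _).preimage (Finset.continuous_restrict s)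
  obtain ⟨f, -, hf⟩ := isCompact_univ.inter_iInter_nonempty C hclosed fun u =>
    let ⟨f, hf⟩ := h u; ⟨f, trivial, Set.mem_iInter₂.2 hf⟩
  exact ⟨f, Set.mem_iInter.1 hf⟩

namespace Tournament

variable {V W : Type*}

theorem ext_rel {S T : Tournament V} (h : S.rel = T.rel) : S = T := by
  cases S; cases T; subst h; rfl

theorem inv_empty (T : Tournament V) : T.inv ∅ = T :=
  ext_rel <| by ext x y; simp [inv]

theorem invSeq_append (T : Tournament V) (Xs Ys : List (Set V)) :
    T.invSeq (Xs ++ Ys) = (T.invSeq Xs).invSeq Ys :=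
  List.foldl_append

theorem invSeq_replicate_empty (T : Tournament V) (k : ℕ) :
    T.invSeq (List.replicate k ∅) = T := by
  induction k with
  | zero => rfl
  | succ k ih => rw [List.replicate_succ', invSeq_append, ih]; exact inv_empty T

theorem restrict_invSeq (T : Tournament V) (Xs : List (Set V)) (A : Set V) :
    (T.invSeq Xs).restrict A = (T.restrict A).invSeq (Xs.map (Subtype.val ⁻¹' ·)) := by
  induction Xs generalizing T with
  | nil => rfl
  | cons X Xs ih => exact ih (T.inv X)

theorem IsAcyclic.restrict {T : Tournament V} (h : T.IsAcyclic) (A : Set V) :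
    (T.restrict A).IsAcyclic :=
  fun x y z => h x y z

theorem indexE_le_length {T : Tournament V} {Xs : List (Set V)} (h : (T.invSeq Xs).IsAcyclic) :
    T.indexE ≤ Xs.length :=
  sInf_le ⟨Xs, rfl, h⟩

theorem indexE_restrict_le (T : Tournament V) (A : Set V) :
    (T.restrict A).indexE ≤ T.indexE := by
  refine le_sInf ?_
  rintro _ ⟨Xs, rfl, hXs⟩
  have hA : ((T.restrict A).invSeq (Xs.map (Subtype.val ⁻¹' ·))).IsAcyclic := by
    rw [← restrict_invSeq]
    exact hXs.restrict A
  simpa using indexE_le_length hA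

theorem indexE_le_iff (T : Tournament V) (m : ℕ) :
    T.indexE ≤ m ↔ ∃ Xs : List (Set V), Xs.length = m ∧ (T.invSeq Xs).IsAcyclic := by
  refine ⟨fun h => ?_, fun ⟨Xs, hlen, hXs⟩ => hlen ▸ indexE_le_length hXs⟩
  have hlt : T.indexE < m + 1 := (ENat.lt_add_one_iff (ENat.natCast_ne_top m)).2 h
  obtain ⟨_, ⟨Xs, rfl, hXs⟩, hXs_lt⟩ := sInf_lt_iff.1 hlt
  have hlen : Xs.length ≤ m := by
    exact_mod_cast (ENat.lt_add_one_iff (ENat.natCast_ne_top m)).1 hXs_lt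
  refine ⟨Xs ++ List.replicate (m - Xs.length) ∅, by simp; omega, ?_⟩
  rwa [invSeq_append, invSeq_replicate_empty]

def setsOf {m : ℕ} (f : V → Fin m → Bool) : List (Set V) :=
  List.ofFn fun i => {v | f v i}

theorem length_setsOf {m : ℕ} (f : V → Fin m → Bool) : (setsOf f).length = m :=
  List.length_ofFn

theorem setsOf_comp {m : ℕ} (f : V → Fin m → Bool) (e : W → V) :
    setsOf (f ∘ e) = (setsOf f).map (e ⁻¹' ·) := by
  simp [setsOf, List.map_ofFn, Function.comp_def]

open Classical in
theorem exists_setsOf_eq (Xs : List (Set V)) : ∃ f : V → Fin Xs.length → Bool, setsOf f = Xs :=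
  ⟨fun v i => decide (v ∈ Xs[i]), by simp [setsOf]⟩

theorem indexE_le_iff_exists_setsOf (T : Tournament V) (m : ℕ) :
    T.indexE ≤ m ↔ ∃ f : V → Fin m → Bool, (T.invSeq (setsOf f)).IsAcyclic := by
  rw [indexE_le_iff]
  constructor
  · rintro ⟨Xs, rfl, hXs⟩
    obtain ⟨f, hf⟩ := exists_setsOf_eq Xs
    exact ⟨f, hf.symm ▸ hXs⟩
  · rintro ⟨f, hf⟩
    exact ⟨setsOf f, length_setsOf f, hf⟩

theorem restrict_invSeq_setsOf {m : ℕ} (T : Tournament V) (f : V → Fin m → Bool) (A : Set V) :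
    (T.invSeq (setsOf f)).restrict A = (T.restrict A).invSeq (setsOf (f ∘ Subtype.val)) := by
  rw [restrict_invSeq, setsOf_comp]

def IsAcyclicOn (T : Tournament V) (A : Set V) : Prop :=
  ∀ x ∈ A, ∀ y ∈ A, ∀ z ∈ A, T.rel x y → T.rel y z → T.rel x z

theorem isAcyclic_restrict_iff {T : Tournament V} {A : Set V} :
    (T.restrict A).IsAcyclic ↔ T.IsAcyclicOn A := by
  simp [IsAcyclic, IsAcyclicOn, restrict]

theorem IsAcyclicOn.mono {T : Tournament V} {A B : Set V} (h : T.IsAcyclicOn B) (hAB : A ⊆ B) :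
    T.IsAcyclicOn A :=
  fun x hx y hy z hz => h x (hAB hx) y (hAB hy) z (hAB hz)

theorem isAcyclic_iff_forall_finset {T : Tournament V} :
    T.IsAcyclic ↔ ∀ A : Finset V, T.IsAcyclicOn A := by
  classical
  refine ⟨fun h A x _ y _ z _ => h x y z, fun h x y z => h {x, y, z} x ?_ y ?_ z ?_⟩ <;> simp

theorem isAcyclicOn_invSeq_setsOf_congr {m : ℕ} (T : Tournament V) {A : Set V}
    {f g : V → Fin m → Bool} (hfg : ∀ x ∈ A, f x = g x)
    (hf : (T.invSeq (setsOf f)).IsAcyclicOn A) : (T.invSeq (setsOf g)).IsAcyclicOn A := by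
  have hfg' : f ∘ Subtype.val = g ∘ (Subtype.val : A → V) := funext fun x => hfg x x.2
  rw [← isAcyclic_restrict_iff, restrict_invSeq_setsOf] at hf ⊢
  rwa [← hfg']

theorem exists_isAcyclicOn_invSeq_setsOf {T : Tournament V} {A : Set V} {m : ℕ}
    (h : (T.restrict A).indexE ≤ m) :
    ∃ f : V → Fin m → Bool, (T.invSeq (setsOf f)).IsAcyclicOn A := by
  obtain ⟨g, hg⟩ := (indexE_le_iff_exists_setsOf _ m).1 h
  let f := Function.extend Subtype.val g fun _ _ => false
  have hfg : f ∘ Subtype.val = g :=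
    funext (Subtype.val_injective.extend_apply g fun _ _ => false)
  refine ⟨f, ?_⟩
  rwa [← isAcyclic_restrict_iff, restrict_invSeq_setsOf, hfg]

end Tournament

open Tournament in
/-- a tournament (on an arbitrary vertex set) has inversion index at
most `m` if and only if every finite induced subtournament has inversion index at
most `m`. -/
theorem indexE_le_iff_finite_subtournaments {V : Type*} (T : Tournament V) (m : ℕ) :
    T.indexE ≤ (m : ℕ∞) ↔
      ∀ A : Set V, A.Finite → (T.restrict A).indexE ≤ (m : ℕ∞) := by
  refine ⟨fun h A _ => (indexE_restrict_le T A).trans h, fun h => ?_⟩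
  classical
  have hfinite : ∀ u : Finset (Finset V), ∃ f : V → Fin m → Bool,
      ∀ A ∈ u, (T.invSeq (setsOf f)).IsAcyclicOn A := by
    intro u
    obtain ⟨f, hf⟩ := exists_isAcyclicOn_invSeq_setsOf (h _ (u.sup id).finite_toSet)
    exact ⟨f, fun A hA => hf.mono (Finset.coe_subset.2 (Finset.le_sup (f := id) hA))⟩
  obtain ⟨f, hf⟩ := exists_forall_mem_of_finitely_determined
    (fun A : Finset V => {f : V → Fin m → Bool | (T.invSeq (setsOf f)).IsAcyclicOn A})
    (fun A => ⟨A, fun _ _ hfg => isAcyclicOn_invSeq_setsOf_congr T hfg⟩) hfinite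
  exact (indexE_le_iff_exists_setsOf T m).2 ⟨f, isAcyclic_iff_forall_finset.2 hf⟩
end
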